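/- arXiv:1805.10693 — 2 statements merged into one kernel-verified Lean document; each statement's English description precedes it below -/
import Mathlib

section
/- Group strategyproofness of generalized resistant hyperplane mechanisms: Let x₁, …, x_n ∈ ℝᵈ and S₁, …, S_{d+1} ⊆ [n] nonempty pairwise disjoint with {x_i : i ∈ S_t} well separable in ℝᵈ, and k_t ∈ [|S_t|]. Suppose M maps each y ∈ ℝⁿ to the unique affine β with k_t-th smallest residual in each S_t equal to zero. Then for any true values y, any coalition C ⊆ [n], and any misreports ỹ with ỹ_i = y_i for i ∉ C: if M(ỹ) ≠ M(y), then some agent i ∈ C is strictly worse off, i.e., the outcome for i under M(ỹ) is strictly further from y_i on the same side, formally: there exists i ∈ C with either M(ỹ)(x_i) > M(y)(x_i) ≥ y_i or M(ỹ)(x_i) < M(y)(x_i) ≤ y_i. -/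
/-- Evaluation of the affine function `β(p) = ⟨β₁, p⟩ + β₀`. -/
def affEval {d : ℕ} (β : (Fin d → ℝ) × ℝ) (p : Fin d → ℝ) : ℝ :=
  (∑ j, β.1 j * p j) + β.2

/-- The sets `X 0, …, X (m-1)` in `ℝᵈ` are well separable. -/
def WellSeparable {d m : ℕ} (X : Fin m → Set (Fin d → ℝ)) : Prop :=
  ∀ I J : Finset (Fin m), Disjoint I J →
    ∃ (w : Fin d → ℝ) (c : ℝ),
      (∀ t ∈ I, ∀ p ∈ X t, (∑ j, w j * p j) < c) ∧
      (∀ t ∈ J, ∀ p ∈ X t, c < (∑ j, w j * p j))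

/-- The `k`-th smallest value of the multiset `{r i : i ∈ s}` (1-indexed). -/
noncomputable def kthSmallest {n : ℕ} (s : Finset (Fin n)) (r : Fin n → ℝ) (k : ℕ) : ℝ :=
  (Multiset.sort (s.val.map r) (· ≤ ·)).getD (k - 1) 0

/-!
Let `β = M y`, `β' = M yt` and suppose no member of `C` is worse off. Comparing the two `k t`-th
order statistics, every group `S t` contains an agent with `y i ≤ β (x i)` and `β' (x i) ≤ yt i`;
if `β' (x i) > β (x i)`, then as a member of `C` she would be worse off and as a non-member
she would have `yt i = y i ≤ β (x i) < β' (x i) ≤ yt i`; so `β' (x i) ≤ β (x i)`.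
Symmetrically some agent of `S t` has `β' (x i) ≥ β (x i)`. Hence the affine function `β' - β`
vanishes at a point `q t` of the convex hull of each group. By Radon's theorem, well separability
makes these `d + 1` points affinely independent, so they span `ℝᵈ` and `β' = β`.
-/

open Finset

theorem List.SortedLE.countP_lt_getElem_le {α : Type*} [LinearOrder α] {l : List α}
    (hl : l.SortedLE) {i : ℕ} (hi : i < l.length) : l.countP (· < l[i]) ≤ i := by
  have hdrop : (l.drop i).countP (· < l[i]) = 0 := List.countP_eq_zero.2 fun a ha => by
    obtain ⟨j, hj, rfl⟩ := List.mem_drop_iff_getElem.1 ha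
    simpa using hl.getElem_le_getElem_of_le (Nat.le_add_right i j)
  calc l.countP (· < l[i])
      = (l.take i).countP (· < l[i]) + (l.drop i).countP (· < l[i]) := by
        rw [← List.countP_append, List.take_append_drop]
    _ ≤ i := by
      rw [hdrop, add_zero]
      exact List.countP_le_length.trans (List.length_take_le i l)

theorem List.SortedLE.lt_countP_le_getElem {α : Type*} [LinearOrder α] {l : List α}
    (hl : l.SortedLE) {i : ℕ} (hi : i < l.length) : i < l.countP (· ≤ l[i]) := by
  have htake : ∀ a ∈ l.take (i + 1), a ≤ l[i] := fun a ha => by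
    obtain ⟨j, hj, rfl⟩ := List.mem_take_iff_getElem.1 ha
    exact hl.getElem_le_getElem_of_le (by omega)
  have hcount : (l.take (i + 1)).countP (· ≤ l[i]) = i + 1 := by
    rw [List.countP_eq_length.2 (by simpa using htake), List.length_take]
    omega
  have := (List.take_sublist (i + 1) l).countP_le (p := (· ≤ l[i]))
  omega

section kthSmallest

variable {n : ℕ} {s : Finset (Fin n)} {r : Fin n → ℝ} {k : ℕ}

theorem countP_sort_map_eq_card_filter (p : ℝ → Prop) [DecidablePred p] :
    (Multiset.sort (s.val.map r) (· ≤ ·)).countP (p ·) = #{i ∈ s | p (r i)} := by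
  rw [← Multiset.coe_countP, Multiset.sort_eq, Multiset.countP_map]
  rfl

theorem kthSmallest_eq_getElem (hk : 1 ≤ k) (hks : k ≤ #s) :
    ∃ h : k - 1 < (Multiset.sort (s.val.map r) (· ≤ ·)).length,
      kthSmallest s r k = (Multiset.sort (s.val.map r) (· ≤ ·))[k - 1] := by
  have h : k - 1 < (Multiset.sort (s.val.map r) (· ≤ ·)).length := by
    rw [Multiset.length_sort, Multiset.card_map]; exact lt_of_lt_of_le (by omega) hks
  exact ⟨h, List.getD_eq_getElem _ _ h⟩

theorem card_filter_lt_kthSmallest_le (hk : 1 ≤ k) (hks : k ≤ #s) :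
    #{i ∈ s | r i < kthSmallest s r k} ≤ k - 1 := by
  obtain ⟨h, hkth⟩ := kthSmallest_eq_getElem (r := r) hk hks
  have := (Multiset.pairwise_sort _ _).sortedLE.countP_lt_getElem_le h
  rwa [countP_sort_map_eq_card_filter, ← hkth] at this

theorem le_card_filter_le_kthSmallest (hk : 1 ≤ k) (hks : k ≤ #s) :
    k ≤ #{i ∈ s | r i ≤ kthSmallest s r k} := by
  obtain ⟨h, hkth⟩ := kthSmallest_eq_getElem (r := r) hk hks
  have := (Multiset.pairwise_sort _ _).sortedLE.lt_countP_le_getElem h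
  rw [countP_sort_map_eq_card_filter, ← hkth] at this
  omega

theorem exists_le_kthSmallest_and_kthSmallest_le (r r' : Fin n → ℝ) (hk : 1 ≤ k)
    (hks : k ≤ #s) :
    ∃ i ∈ s, r i ≤ kthSmallest s r k ∧ kthSmallest s r' k ≤ r' i := by
  have hlt := card_filter_lt_kthSmallest_le (r := r') hk hks
  have hle := le_card_filter_le_kthSmallest (r := r) hk hks
  have hsplit := card_filter_add_card_filter_not (s := s) (fun i => r' i < kthSmallest s r' k)
  obtain ⟨i, hi⟩ := inter_nonempty_of_card_lt_card_add_card
    (filter_subset (fun i => r i ≤ kthSmallest s r k) s)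
    (filter_subset (fun i => ¬ r' i < kthSmallest s r' k) s) (by omega)
  simp only [mem_inter, mem_filter, not_lt] at hi
  exact ⟨i, hi.1.1, hi.1.2, hi.2.2⟩

end kthSmallest

section affEval

variable {d : ℕ}

theorem affEval_sub (β β' : (Fin d → ℝ) × ℝ) (p : Fin d → ℝ) :
    affEval (β' - β) p = affEval β' p - affEval β p := by
  simp only [affEval, Prod.fst_sub, Prod.snd_sub, Pi.sub_apply, sub_mul, sum_sub_distrib]
  ring

theorem eq_zero_of_forall_affEval_eq_zero {β : (Fin d → ℝ) × ℝ} (h : ∀ p, affEval β p = 0) :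
    β = 0 := by
  have h₂ : β.2 = 0 := by simpa [affEval] using h 0
  refine Prod.ext (funext fun j => ?_) h₂
  simpa [affEval, h₂, Pi.single_apply] using h (Pi.single j 1)

def affEvalAffineMap (β : (Fin d → ℝ) × ℝ) : (Fin d → ℝ) →ᵃ[ℝ] ℝ :=
  (dotProductBilin ℝ ℝ β.1).toAffineMap + AffineMap.const ℝ _ β.2

@[simp]
theorem affEvalAffineMap_apply (β : (Fin d → ℝ) × ℝ) (p : Fin d → ℝ) :
    affEvalAffineMap β p = affEval β p :=
  rfl

theorem continuous_affEval (β : (Fin d → ℝ) × ℝ) : Continuous (affEval β) := by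
  unfold affEval; fun_prop

end affEval

section WellSeparable

variable {d : ℕ}

theorem convexHull_subset_setOf_dotProduct_lt {s : Set (Fin d → ℝ)} {w : Fin d → ℝ} {c : ℝ}
    (h : ∀ p ∈ s, ∑ j, w j * p j < c) : convexHull ℝ s ⊆ {p | ∑ j, w j * p j < c} :=
  convexHull_min h (convex_halfSpace_lt (dotProductBilin ℝ ℝ w).isLinear c)

theorem convexHull_subset_setOf_lt_dotProduct {s : Set (Fin d → ℝ)} {w : Fin d → ℝ} {c : ℝ}
    (h : ∀ p ∈ s, c < ∑ j, w j * p j) : convexHull ℝ s ⊆ {p | c < ∑ j, w j * p j} :=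
  convexHull_min h (convex_halfSpace_gt (dotProductBilin ℝ ℝ w).isLinear c)

theorem WellSeparable.affineIndependent {m : ℕ} {X : Fin m → Set (Fin d → ℝ)}
    (hX : WellSeparable X) {q : Fin m → Fin d → ℝ} (hq : ∀ t, q t ∈ convexHull ℝ (X t)) :
    AffineIndependent ℝ q := by
  classical
  by_contra hdep
  obtain ⟨I, p, hpI, hpJ⟩ := Convex.radon_partition hdep
  obtain ⟨w, c, hI, hJ⟩ := hX I.toFinset Iᶜ.toFinset
    (by rw [Set.toFinset_compl]; exact disjoint_compl_right)
  have hlt : ∑ j, w j * p j < c := by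
    refine convexHull_subset_setOf_dotProduct_lt ?_ hpI
    rintro _ ⟨t, ht, rfl⟩
    exact convexHull_subset_setOf_dotProduct_lt (hI t (by simpa using ht)) (hq t)
  have hgt : c < ∑ j, w j * p j := by
    refine convexHull_subset_setOf_lt_dotProduct ?_ hpJ
    rintro _ ⟨t, ht, rfl⟩
    exact convexHull_subset_setOf_lt_dotProduct (hJ t (by simpa using ht)) (hq t)
  exact lt_asymm hlt hgt

theorem WellSeparable.eq_zero_of_affEval_sign_change {X : Fin (d + 1) → Set (Fin d → ℝ)}
    (hX : WellSeparable X) {β : (Fin d → ℝ) × ℝ}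
    (hle : ∀ t, ∃ a ∈ X t, affEval β a ≤ 0) (hge : ∀ t, ∃ b ∈ X t, 0 ≤ affEval β b) :
    β = 0 := by
  have hzero : ∀ t, ∃ q ∈ convexHull ℝ (X t), affEval β q = 0 := fun t => by
    obtain ⟨a, ha, ha0⟩ := hle t
    obtain ⟨b, hb, hb0⟩ := hge t
    exact (convex_convexHull ℝ (X t)).isPreconnected.intermediate_value
      (subset_convexHull ℝ _ ha) (subset_convexHull ℝ _ hb) (continuous_affEval β).continuousOn
      ⟨ha0, hb0⟩
  choose q hq hq0 using hzero
  have hspan : affineSpan ℝ (Set.range q) = ⊤ :=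
    (hX.affineIndependent hq).affineSpan_eq_top_iff_card_eq_finrank_add_one.2 (by simp)
  have hmap : affEvalAffineMap β = AffineMap.const ℝ _ 0 :=
    AffineMap.ext_on hspan (by rintro _ ⟨t, rfl⟩; simp [hq0])
  exact eq_zero_of_forall_affEval_eq_zero fun p => by
    simpa using congrArg (· p) hmap

end WellSeparable

theorem stmt7_general (d n : ℕ) (x : Fin n → Fin d → ℝ) (S : Fin (d + 1) → Finset (Fin n))
    (hsep : WellSeparable (fun t => x '' ↑(S t)))
    (k : Fin (d + 1) → ℕ) (hk : ∀ t, 1 ≤ k t ∧ k t ≤ (S t).card)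
    (M : (Fin n → ℝ) → (Fin d → ℝ) × ℝ)
    (hM : ∀ (z : Fin n → ℝ) (t : Fin (d + 1)),
      kthSmallest (S t) (fun i => z i - affEval (M z) (x i)) (k t) = 0)
    (y yt : Fin n → ℝ) (C : Finset (Fin n))
    (hC : ∀ i ∉ C, yt i = y i)
    (hchange : M yt ≠ M y) :
    ∃ i ∈ C,
      (affEval (M yt) (x i) > affEval (M y) (x i) ∧ affEval (M y) (x i) ≥ y i) ∨
      (affEval (M yt) (x i) < affEval (M y) (x i) ∧ affEval (M y) (x i) ≤ y i) := by
  by_contra! hgood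
  refine hchange (sub_eq_zero.1 (hsep.eq_zero_of_affEval_sign_change (fun t => ?_) (fun t => ?_)))
  · obtain ⟨i, hi, hr, hr'⟩ := exists_le_kthSmallest_and_kthSmallest_le
      (fun i => y i - affEval (M y) (x i)) (fun i => yt i - affEval (M yt) (x i)) (hk t).1 (hk t).2
    rw [hM] at hr hr'
    refine ⟨x i, Set.mem_image_of_mem x hi, ?_⟩
    rw [affEval_sub, sub_nonpos]
    by_cases hiC : i ∈ C
    · by_contra! hworse
      linarith [(hgood i hiC).1 hworse]
    · linarith [hC i hiC]
  · obtain ⟨i, hi, hr', hr⟩ := exists_le_kthSmallest_and_kthSmallest_le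
      (fun i => yt i - affEval (M yt) (x i)) (fun i => y i - affEval (M y) (x i)) (hk t).1 (hk t).2
    rw [hM] at hr hr'
    refine ⟨x i, Set.mem_image_of_mem x hi, ?_⟩
    rw [affEval_sub, sub_nonneg]
    by_cases hiC : i ∈ C
    · by_contra! hworse
      linarith [(hgood i hiC).2 hworse]
    · linarith [hC i hiC]

/-- Group strategyproofness of generalized resistant hyperplane mechanisms: if a coalition
`C` misreports and changes the output hyperplane, then some member of `C` is strictly
worse off: her outcome moves strictly away from her true value on the same side. -/
theorem stmt7 (d n : ℕ) (x : Fin n → Fin d → ℝ) (S : Fin (d + 1) → Finset (Fin n))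
    (hne : ∀ t, (S t).Nonempty)
    (hdisj : ∀ t t', t ≠ t' → Disjoint (S t) (S t'))
    (hsep : WellSeparable (fun t => x '' ↑(S t)))
    (k : Fin (d + 1) → ℕ) (hk : ∀ t, 1 ≤ k t ∧ k t ≤ (S t).card)
    (M : (Fin n → ℝ) → (Fin d → ℝ) × ℝ)
    (hM : ∀ (z : Fin n → ℝ) (t : Fin (d + 1)),
      kthSmallest (S t) (fun i => z i - affEval (M z) (x i)) (k t) = 0)
    (y yt : Fin n → ℝ) (C : Finset (Fin n))
    (hC : ∀ i ∉ C, yt i = y i)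
    (hchange : M yt ≠ M y) :
    ∃ i ∈ C,
      (affEval (M yt) (x i) > affEval (M y) (x i) ∧ affEval (M y) (x i) ≥ y i) ∨
      (affEval (M yt) (x i) < affEval (M y) (x i) ∧ affEval (M y) (x i) ≤ y i) :=
  stmt7_general d n x S hsep k hk M hM y yt C hC hchange
end

section
/- An impartial mechanism for simple linear regression with admissible points is group strategyproof if and only if it is a constant function of the reports. -/
/-- Outcome `a` is weakly preferred to outcome `b` under every single-peaked preference
with peak `p`: `a` lies weakly between `p` and `b`. -/
def WeaklyPrefers (p a b : ℝ) : Prop := (p ≤ a ∧ a ≤ b) ∨ (b ≤ a ∧ a ≤ p)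

/-- Outcome `a` is strictly preferred to outcome `b` under every single-peaked preference
with peak `p`: `p ≤ a < b` or `b < a ≤ p`. -/
def StrictlyPrefers (p a b : ℝ) : Prop := (p ≤ a ∧ a < b) ∨ (b < a ∧ a ≤ p)

/-- The outcome for agent `i` when the mechanism returns the line `(β₁, β₀)`. -/
def lineOut {n : ℕ} (x : Fin n → ℝ) (M : (Fin n → ℝ) → ℝ × ℝ)
    (y : Fin n → ℝ) (i : Fin n) : ℝ :=
  (M y).1 * x i + (M y).2

/-!
If agent `i`'s report could move agent `j`'s outcome from `A` to `B ≠ A`, then at the profile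
where `j`'s true value is `B` the coalition `{i, j}` manipulates: `i` makes the report that
moves `j` to its peak, while impartiality keeps `i`'s own outcome unchanged. So under group
strategyproofness no report affects any outcome, hence all outcomes are constant, and a line
is pinned down by its values at two distinct abscissae.
-/

open Function

theorem weaklyPrefers_refl (p a : ℝ) : WeaklyPrefers p a a := by
  rcases le_total p a with h | h
  · exact Or.inl ⟨h, le_rfl⟩
  · exact Or.inr ⟨le_rfl, h⟩

theorem StrictlyPrefers.weaklyPrefers {p a b : ℝ} (h : StrictlyPrefers p a b) :
    WeaklyPrefers p a b := by
  rcases h with ⟨h₁, h₂⟩ | ⟨h₁, h₂⟩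
  · exact Or.inl ⟨h₁, h₂.le⟩
  · exact Or.inr ⟨h₁.le, h₂⟩

theorem strictlyPrefers_peak {p b : ℝ} (h : p ≠ b) : StrictlyPrefers p p b := by
  rcases h.lt_or_gt with h | h
  · exact Or.inl ⟨le_rfl, h⟩
  · exact Or.inr ⟨h, le_rfl⟩

theorem not_strictlyPrefers_self (p a : ℝ) : ¬ StrictlyPrefers p a a := by
  rintro (⟨-, h⟩ | ⟨h, -⟩) <;> exact lt_irrefl a h

theorem apply_eq_of_forall_update_eq {ι α β : Type*} [Fintype ι] [DecidableEq ι]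
    {g : (ι → α) → β} (hg : ∀ y i v, g (update y i v) = g y) (y y' : ι → α) :
    g y = g y' := by
  suffices ∀ s : Finset ι, ∀ y, (∀ i ∉ s, y i = y' i) → g y = g y' from
    this Finset.univ y fun i hi => absurd (Finset.mem_univ i) hi
  intro s
  induction s using Finset.induction_on with
  | empty => exact fun y hy => congrArg g (funext fun i => hy i (Finset.notMem_empty i))
  | insert a s _ ih =>
    intro y hy
    rw [← hg y a (y' a)]
    refine ih _ fun i hi => ?_
    by_cases hia : i = a
    · subst hia; exact update_self ..
    · rw [update_of_ne hia]
      exact hy i (by simp [hi, hia])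

theorem line_eq_of_eval_eq {a b : ℝ × ℝ} {x₁ x₂ : ℝ} (hx : x₁ ≠ x₂)
    (h₁ : a.1 * x₁ + a.2 = b.1 * x₁ + b.2) (h₂ : a.1 * x₂ + a.2 = b.1 * x₂ + b.2) :
    a = b := by
  have hslope : a.1 = b.1 := by
    have : (a.1 - b.1) * (x₁ - x₂) = 0 := by linear_combination h₁ - h₂
    simpa [sub_eq_zero, hx] using this
  exact Prod.ext hslope (by rw [hslope] at h₁; linarith)

section Mechanism

variable {ι : Type*} (f : (ι → ℝ) → ι → ℝ)

def IsImpartial [DecidableEq ι] : Prop :=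
  ∀ y i v, f (update y i v) i = f y i

def IsGroupStrategyproof : Prop :=
  ∀ (y yt : ι → ℝ) (S : Finset ι), (∀ i ∉ S, yt i = y i) →
    ¬ ((∀ i ∈ S, WeaklyPrefers (y i) (f yt i) (f y i)) ∧
        ∃ i ∈ S, StrictlyPrefers (y i) (f yt i) (f y i))

variable {f}

theorem IsGroupStrategyproof.update_apply_eq [DecidableEq ι] (hgsp : IsGroupStrategyproof f)
    (himp : IsImpartial f) (y : ι → ℝ) (i j : ι) (v : ℝ) :
    f (update y i v) j = f y j := by
  by_cases hij : i = j
  · subst hij; exact himp y i v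
  by_contra hne
  set B := f (update y i v) j
  set z := update y j B
  have hzj : f z j = f y j := himp y j B
  have hzij : f (update z i v) j = B := by
    rw [show update z i v = update (update y i v) j B from (update_comm hij ..).symm]
    exact himp _ j B
  have hj : StrictlyPrefers (z j) (f (update z i v) j) (f z j) := by
    rw [hzij, hzj, show z j = B from update_self ..]
    exact strictlyPrefers_peak hne
  refine hgsp z (update z i v) {i, j} (fun k hk => ?_) ⟨fun k hk => ?_, j, by simp, hj⟩
  · exact update_of_ne (show k ≠ i by rintro rfl; simp at hk) v z
  · rcases Finset.mem_insert.mp hk with rfl | hk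
    · rw [himp z k v]; exact weaklyPrefers_refl ..
    · rw [Finset.mem_singleton.mp hk]; exact hj.weaklyPrefers

theorem isGroupStrategyproof_of_forall_eq (hf : ∀ y y', f y = f y') :
    IsGroupStrategyproof f := by
  rintro y yt S - ⟨-, k, -, hk⟩
  rw [hf yt y] at hk
  exact not_strictlyPrefers_self _ _ hk

end Mechanism

/-- An impartial mechanism for simple linear regression with admissible (distinct)
x-coordinates is group strategyproof if and only if it is a constant function. -/
theorem stmt13 (n : ℕ) (hn : 2 ≤ n) (x : Fin n → ℝ) (hx : Function.Injective x)
    (M : (Fin n → ℝ) → ℝ × ℝ)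
    (himp : ∀ (y : Fin n → ℝ) (i : Fin n) (y' : ℝ),
      lineOut x M (Function.update y i y') i = lineOut x M y i) :
    ((∀ (y yt : Fin n → ℝ) (S : Finset (Fin n)), (∀ i ∉ S, yt i = y i) →
        ¬ ((∀ i ∈ S, WeaklyPrefers (y i) (lineOut x M yt i) (lineOut x M y i)) ∧
            ∃ i ∈ S, StrictlyPrefers (y i) (lineOut x M yt i) (lineOut x M y i)))
      ↔ ∃ b : ℝ × ℝ, ∀ y : Fin n → ℝ, M y = b) := by
  change IsGroupStrategyproof (lineOut x M) ↔ _
  constructor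
  · intro hgsp
    have hconst : ∀ y y', lineOut x M y = lineOut x M y' :=
      apply_eq_of_forall_update_eq fun y i v =>
        funext (hgsp.update_apply_eq himp y i · v)
    let i₀ : Fin n := ⟨0, by omega⟩
    let i₁ : Fin n := ⟨1, by omega⟩
    have hx₀₁ : x i₀ ≠ x i₁ := hx.ne (by simp [i₀, i₁, Fin.ext_iff])
    exact ⟨M 0, fun y =>
      line_eq_of_eval_eq hx₀₁ (congrFun (hconst y 0) i₀) (congrFun (hconst y 0) i₁)⟩
  · rintro ⟨b, hb⟩
    exact isGroupStrategyproof_of_forall_eq fun y y' =>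
      funext fun i => by simp only [lineOut, hb]
end
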